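/- The function V(A,B,C) = Λ(A) + Λ(B) + Λ(C) on the set {(A,B,C) : A,B,C > 0, A+B+C = π}, where Λ is the Lobachevsky function, is strictly concave, and its unique maximum on this set occurs at A = B = C = π/3. -/

import Mathlib

/-!
Along a segment `t ↦ x + t (y - x)` in the simplex, the second derivative of
`V = Λ(A) + Λ(B) + Λ(C)` is `-(cot A a² + cot B b² + cot C c²)` with `a + b + c = 0`, since
`Λ'' = -cot`. For the angles of a triangle, `cot A cot B + cot B cot C + cot C cot A = 1` and
`cot A + cot C > 0`, so this quadratic form is positive definite on the plane `a + b + c = 0`;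
hence `V` is strictly concave. Averaging `V` over the three cyclic rotations of a point and applying
the strict Jensen inequality shows that the centroid `(π/3, π/3, π/3)` is the unique maximum.
-/

open Real

/-- The Lobachevsky function `Λ(α) = -∫₀^α ln(2|sin t|) dt`. -/
noncomputable def lobachevsky (α : ℝ) : ℝ := -∫ t in (0:ℝ)..α, Real.log (2 * |Real.sin t|)

open MeasureTheory Set AffineMap

lemma log_two_mul_abs_sin (t : ℝ) : log (2 * |sin t|) = log (2 * sin t) := by
  rw [← abs_two, ← abs_mul, log_abs, abs_two]

lemma lobachevsky_eq_neg_integral (α : ℝ) :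
    lobachevsky α = -∫ t in (0:ℝ)..α, log (2 * sin t) := by
  simp only [lobachevsky, log_two_mul_abs_sin]

lemma intervalIntegrable_log_two_mul_sin (a b : ℝ) :
    IntervalIntegrable (fun t => log (2 * sin t)) volume a b :=
  (analyticOnNhd_const.mul analyticOnNhd_sin).meromorphicOn.intervalIntegrable_log

lemma hasDerivAt_lobachevsky {α : ℝ} (h : sin α ≠ 0) :
    HasDerivAt lobachevsky (-log (2 * sin α)) α := by
  have hcont : ContinuousAt (fun t => log (2 * sin t)) α :=
    (continuous_const.mul continuous_sin).continuousAt.log (mul_ne_zero two_ne_zero h)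
  simp only [funext lobachevsky_eq_neg_integral]
  exact (intervalIntegral.integral_hasDerivAt_right (intervalIntegrable_log_two_mul_sin 0 α)
    (by fun_prop : Measurable _).stronglyMeasurable.stronglyMeasurableAtFilter hcont).neg

lemma hasDerivAt_neg_log_two_mul_sin {α : ℝ} (h : sin α ≠ 0) :
    HasDerivAt (fun a => -log (2 * sin a)) (-cot α) α := by
  have := (((hasDerivAt_sin α).const_mul 2).log (mul_ne_zero two_ne_zero h)).neg
  rwa [mul_div_mul_left _ _ two_ne_zero, ← cot_eq_cos_div_sin] at this

lemma quadratic_pos_of_sum_eq_zero {u v w a b c : ℝ} (huw : 0 < u + w)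
    (hdet : 0 < u * v + v * w + w * u) (habc : a + b + c = 0) (hab : a ≠ 0 ∨ b ≠ 0) :
    0 < u * a ^ 2 + v * b ^ 2 + w * c ^ 2 := by
  obtain rfl : c = -a - b := by linarith
  have hsq : (u + w) * (u * a ^ 2 + v * b ^ 2 + w * (-a - b) ^ 2)
      = ((u + w) * a + w * b) ^ 2 + (u * v + v * w + w * u) * b ^ 2 := by ring
  refine pos_of_mul_pos_right (hsq ▸ ?_) huw.le
  rcases eq_or_ne b 0 with rfl | hb
  · have : (u + w) * a ≠ 0 := mul_ne_zero huw.ne' (hab.resolve_right (not_not.2 rfl))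
    simp only [mul_zero, add_zero, ne_eq, OfNat.ofNat_ne_zero, not_false_eq_true, zero_pow]
    positivity
  · positivity

lemma cot_add_cot_pos {A C : ℝ} (hA : 0 < A) (hC : 0 < C) (hAC : A + C < π) :
    0 < cot A + cot C := by
  have hsA := sin_pos_of_pos_of_lt_pi hA (by linarith)
  have hsC := sin_pos_of_pos_of_lt_pi hC (by linarith)
  have : cot A + cot C = sin (A + C) / (sin A * sin C) := by
    rw [cot_eq_cos_div_sin, cot_eq_cos_div_sin, sin_add]
    field_simp
    ring
  rw [this]
  exact div_pos (sin_pos_of_pos_of_lt_pi (by linarith) hAC) (mul_pos hsA hsC)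

lemma cot_mul_cot_add_cot_mul_cot_add_cot_mul_cot {A B C : ℝ} (hABC : A + B + C = π)
    (hA : sin A ≠ 0) (hB : sin B ≠ 0) (hC : sin C ≠ 0) :
    cot A * cot B + cot B * cot C + cot C * cot A = 1 := by
  obtain rfl : C = π - (A + B) := by linarith
  rw [sin_pi_sub] at hC
  simp only [cot_eq_cos_div_sin, sin_pi_sub, cos_pi_sub]
  field_simp
  rw [sin_add, cos_add]
  ring

lemma strictConcaveOn_of_hasDerivAt2_neg {D : Set ℝ} (hD : Convex ℝ D) {f f' f'' : ℝ → ℝ}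
    (hf : ContinuousOn f D) (hf' : ∀ x ∈ interior D, HasDerivAt f (f' x) x)
    (hf'' : ∀ x ∈ interior D, HasDerivAt f' (f'' x) x) (hf''₀ : ∀ x ∈ interior D, f'' x < 0) :
    StrictConcaveOn ℝ D f := by
  have hanti : StrictAntiOn f' (interior D) :=
    strictAntiOn_of_hasDerivWithinAt_neg hD.interior
      (fun x hx => (hf'' x hx).continuousAt.continuousWithinAt)
      (fun x hx => (hf'' x (interior_subset hx)).hasDerivWithinAt)
      (fun x hx => hf''₀ x (interior_subset hx))
  refine StrictAntiOn.strictConcaveOn_of_deriv hD hf fun x hx y hy hxy => ?_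
  rw [(hf' x hx).deriv, (hf' y hy).deriv]
  exact hanti hx hy hxy

lemma strictConcaveOn_of_forall_lineMap {𝕜 E β : Type*} [Field 𝕜] [LinearOrder 𝕜]
    [IsStrictOrderedRing 𝕜] [AddCommGroup E] [Module 𝕜 E] [AddCommMonoid β] [PartialOrder β]
    [SMul 𝕜 β] {s : Set E} {f : E → β} (hs : Convex 𝕜 s)
    (h : ∀ x ∈ s, ∀ y ∈ s, x ≠ y → StrictConcaveOn 𝕜 (Icc (0 : 𝕜) 1) (f ∘ lineMap x y)) :
    StrictConcaveOn 𝕜 s f := by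
  refine ⟨hs, fun x hx y hy hxy a b ha hb hab => ?_⟩
  have := (h x hx y hy hxy).2 (left_mem_Icc.2 zero_le_one) (right_mem_Icc.2 zero_le_one)
    zero_ne_one ha hb hab
  obtain rfl : a = 1 - b := by rw [← hab, add_sub_cancel_right]
  simp only [Function.comp_apply, lineMap_apply_zero, lineMap_apply_one, smul_eq_mul, mul_zero,
    mul_one, zero_add] at this
  rwa [lineMap_apply_module] at this

def triangleAngles : Set (ℝ × ℝ × ℝ) :=
  {p | 0 < p.1 ∧ 0 < p.2.1 ∧ 0 < p.2.2 ∧ p.1 + p.2.1 + p.2.2 = π}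

noncomputable def lobachevskySum (p : ℝ × ℝ × ℝ) : ℝ :=
  lobachevsky p.1 + lobachevsky p.2.1 + lobachevsky p.2.2

noncomputable def lobachevskySumDirDeriv (p d : ℝ × ℝ × ℝ) : ℝ :=
  -log (2 * sin p.1) * d.1 + -log (2 * sin p.2.1) * d.2.1 + -log (2 * sin p.2.2) * d.2.2

noncomputable def cotQuadForm (p d : ℝ × ℝ × ℝ) : ℝ :=
  cot p.1 * d.1 ^ 2 + cot p.2.1 * d.2.1 ^ 2 + cot p.2.2 * d.2.2 ^ 2

lemma convex_triangleAngles : Convex ℝ triangleAngles := by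
  rintro x ⟨hx₁, hx₂, hx₃, hx⟩ y ⟨hy₁, hy₂, hy₃, hy⟩ a b ha hb hab
  refine ⟨convex_Ioi (0 : ℝ) hx₁ hy₁ ha hb hab, convex_Ioi (0 : ℝ) hx₂ hy₂ ha hb hab,
    convex_Ioi (0 : ℝ) hx₃ hy₃ ha hb hab, ?_⟩
  simp only [Prod.fst_add, Prod.snd_add, Prod.smul_fst, Prod.smul_snd, smul_eq_mul]
  linear_combination a * hx + b * hy + π * hab

lemma sin_ne_zero_of_mem_triangleAngles {p : ℝ × ℝ × ℝ} (hp : p ∈ triangleAngles) :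
    sin p.1 ≠ 0 ∧ sin p.2.1 ≠ 0 ∧ sin p.2.2 ≠ 0 := by
  obtain ⟨h₁, h₂, h₃, h⟩ := hp
  exact ⟨(sin_pos_of_pos_of_lt_pi h₁ (by linarith)).ne',
    (sin_pos_of_pos_of_lt_pi h₂ (by linarith)).ne', (sin_pos_of_pos_of_lt_pi h₃ (by linarith)).ne'⟩

lemma cotQuadForm_pos {p d : ℝ × ℝ × ℝ} (hp : p ∈ triangleAngles)
    (hd : d.1 + d.2.1 + d.2.2 = 0) (hd₀ : d ≠ 0) : 0 < cotQuadForm p d := by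
  obtain ⟨hsA, hsB, hsC⟩ := sin_ne_zero_of_mem_triangleAngles hp
  obtain ⟨hA, hB, hC, hABC⟩ := hp
  refine quadratic_pos_of_sum_eq_zero (cot_add_cot_pos hA hC (by linarith)) ?_ hd ?_
  · rw [cot_mul_cot_add_cot_mul_cot_add_cot_mul_cot hABC hsA hsB hsC]
    exact one_pos
  · by_contra! h
    exact hd₀ (Prod.ext h.1 (Prod.ext h.2 (by rw [Prod.snd_zero, Prod.snd_zero]; linarith)))

lemma hasDerivAt_lobachevskySum_comp_lineMap {x y : ℝ × ℝ × ℝ} {t : ℝ}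
    (ht : lineMap x y t ∈ triangleAngles) :
    HasDerivAt (lobachevskySum ∘ lineMap x y)
      (lobachevskySumDirDeriv (lineMap x y t) (y - x)) t := by
  obtain ⟨h₁, h₂, h₃⟩ := sin_ne_zero_of_mem_triangleAngles ht
  simp only [fst_lineMap, snd_lineMap] at h₁ h₂ h₃
  simp only [lobachevskySum, lobachevskySumDirDeriv, Function.comp_def, fst_lineMap, snd_lineMap,
    Prod.fst_sub, Prod.snd_sub]
  exact ((((hasDerivAt_lobachevsky h₁).comp t hasDerivAt_lineMap).add
    ((hasDerivAt_lobachevsky h₂).comp t hasDerivAt_lineMap)).add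
    ((hasDerivAt_lobachevsky h₃).comp t hasDerivAt_lineMap))

lemma hasDerivAt_lobachevskySumDirDeriv_comp_lineMap {x y : ℝ × ℝ × ℝ} {t : ℝ}
    (ht : lineMap x y t ∈ triangleAngles) :
    HasDerivAt (fun s => lobachevskySumDirDeriv (lineMap x y s) (y - x))
      (-cotQuadForm (lineMap x y t) (y - x)) t := by
  obtain ⟨h₁, h₂, h₃⟩ := sin_ne_zero_of_mem_triangleAngles ht
  simp only [fst_lineMap, snd_lineMap] at h₁ h₂ h₃
  simp only [cotQuadForm, lobachevskySumDirDeriv, fst_lineMap, snd_lineMap, Prod.fst_sub,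
    Prod.snd_sub]
  have hterm : ∀ {a b : ℝ}, sin (lineMap a b t) ≠ 0 →
      HasDerivAt (fun s => -log (2 * sin (lineMap a b s)) * (b - a))
        (-cot (lineMap a b t) * (b - a) * (b - a)) t := fun h =>
    ((hasDerivAt_neg_log_two_mul_sin h).comp t hasDerivAt_lineMap).mul_const _
  exact (((hterm h₁).add (hterm h₂)).add (hterm h₃)).congr_deriv (by ring)

lemma strictConcaveOn_lobachevskySum_comp_lineMap {x y : ℝ × ℝ × ℝ} (hx : x ∈ triangleAngles)
    (hy : y ∈ triangleAngles) (hxy : x ≠ y) :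
    StrictConcaveOn ℝ (Icc (0 : ℝ) 1) (lobachevskySum ∘ lineMap x y) := by
  have hmem : ∀ t ∈ interior (Icc (0 : ℝ) 1), lineMap x y t ∈ triangleAngles := fun t ht =>
    convex_triangleAngles.lineMap_mem hx hy (interior_subset ht)
  have hd : (y - x).1 + (y - x).2.1 + (y - x).2.2 = 0 := by
    simp only [Prod.fst_sub, Prod.snd_sub]
    linarith [hx.2.2.2, hy.2.2.2]
  refine strictConcaveOn_of_hasDerivAt2_neg (convex_Icc 0 1) (fun t ht => ?_)
    (fun t ht => hasDerivAt_lobachevskySum_comp_lineMap (hmem t ht))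
    (fun t ht => hasDerivAt_lobachevskySumDirDeriv_comp_lineMap (hmem t ht))
    (fun t ht => neg_neg_of_pos (cotQuadForm_pos (hmem t ht) hd (sub_ne_zero.2 hxy.symm)))
  exact (hasDerivAt_lobachevskySum_comp_lineMap
    (convex_triangleAngles.lineMap_mem hx hy ht)).continuousAt.continuousWithinAt

lemma strictConcaveOn_lobachevskySum : StrictConcaveOn ℝ triangleAngles lobachevskySum :=
  strictConcaveOn_of_forall_lineMap convex_triangleAngles fun _ hx _ hy hxy =>
    strictConcaveOn_lobachevskySum_comp_lineMap hx hy hxy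

lemma lobachevskySum_lt_of_ne_pi_div_three {p : ℝ × ℝ × ℝ} (hp : p ∈ triangleAngles)
    (hne : p ≠ (π / 3, π / 3, π / 3)) :
    lobachevskySum p < lobachevskySum (π / 3, π / 3, π / 3) := by
  obtain ⟨A, B, C⟩ := p
  obtain ⟨hA, hB, hC, hABC⟩ : 0 < A ∧ 0 < B ∧ 0 < C ∧ A + B + C = π := hp
  set q : Fin 3 → ℝ × ℝ × ℝ := ![(A, B, C), (B, C, A), (C, A, B)]
  have hq : ∀ i ∈ Finset.univ, q i ∈ triangleAngles := by
    intro i _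
    fin_cases i <;>
      simp only [triangleAngles, mem_ofPred_eq, q, Fin.zero_eta, Fin.mk_one, Fin.reduceFinMk,
        Fin.isValue, Matrix.cons_val_zero, Matrix.cons_val_one, Matrix.cons_val] <;>
      exact ⟨‹_›, ‹_›, ‹_›, by linarith⟩
  have hq₀₁ : q 0 ≠ q 1 := by
    intro h
    simp only [q, Matrix.cons_val_zero, Matrix.cons_val_one, Prod.mk.injEq] at h
    exact hne (Prod.ext (by linarith) (Prod.ext (by linarith) (by linarith)))
  have hV : ∀ i, lobachevskySum (q i) = lobachevskySum (A, B, C) := by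
    intro i
    fin_cases i <;>
      simp only [lobachevskySum, q, Fin.zero_eta, Fin.mk_one, Fin.reduceFinMk, Fin.isValue,
        Matrix.cons_val_zero, Matrix.cons_val_one, Matrix.cons_val] <;>
      ring
  have hcentroid : ∑ i, (1 / 3 : ℝ) • q i = (π / 3, π / 3, π / 3) := by
    simp only [q, Fin.sum_univ_three, Matrix.cons_val_zero, Matrix.cons_val_one, Matrix.cons_val,
      Prod.smul_mk, smul_eq_mul, Prod.mk_add_mk, Prod.mk.injEq]
    refine ⟨?_, ?_, ?_⟩ <;> linarith
  have hJ := strictConcaveOn_lobachevskySum.lt_map_sum (w := fun _ => 1 / 3)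
    (fun _ _ => by norm_num) (by simp) hq ⟨0, Finset.mem_univ _, 1, Finset.mem_univ _, hq₀₁⟩
  rw [hcentroid] at hJ
  simp only [hV, Finset.sum_const, Finset.card_univ, Fintype.card_fin, smul_eq_mul,
    nsmul_eq_mul] at hJ
  linarith

/-- The function `V(A,B,C) = Λ(A) + Λ(B) + Λ(C)` on the simplex
`{A,B,C > 0, A+B+C = π}` is strictly concave, and its unique maximum on this set
occurs at `A = B = C = π/3`. -/
theorem ideal_tetrahedron_volume_max :
    StrictConcaveOn ℝ
      {p : ℝ × ℝ × ℝ | 0 < p.1 ∧ 0 < p.2.1 ∧ 0 < p.2.2 ∧ p.1 + p.2.1 + p.2.2 = π}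
      (fun p => lobachevsky p.1 + lobachevsky p.2.1 + lobachevsky p.2.2) ∧
    ∀ p ∈ {p : ℝ × ℝ × ℝ | 0 < p.1 ∧ 0 < p.2.1 ∧ 0 < p.2.2 ∧ p.1 + p.2.1 + p.2.2 = π},
      p ≠ (π / 3, π / 3, π / 3) →
        lobachevsky p.1 + lobachevsky p.2.1 + lobachevsky p.2.2
          < lobachevsky (π / 3) + lobachevsky (π / 3) + lobachevsky (π / 3) :=
  ⟨strictConcaveOn_lobachevskySum, fun _ => lobachevskySum_lt_of_ne_pi_div_three⟩
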